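/- Suppose minsurp(G) ≥ 0 and I is a nonempty independent set with surp_G(I) ≤ 1. Then in the graph obtained from G by exhaustively applying the surplus-0 deletion rule and surplus-1 contraction rule, the vertex-cover budget k decreases by at least |I|; equivalently, there is a sequence of valid preprocessing operations reducing k by at least |I|. -/
import Mathlib


open Finset

/-- `I` is an independent set of vertices in `G`. -/
def IsIndep (G : SimpleGraph ℕ) (I : Finset ℕ) : Prop :=
  ∀ u ∈ I, ∀ v ∈ I, ¬ G.Adj u v

open Classical in
/-- The neighborhood of `I` inside the induced subgraph of `G` on `S`. -/
noncomputable def nbrOn (G : SimpleGraph ℕ) (S I : Finset ℕ) : Finset ℕ :=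
  S.filter (fun v => v ∉ I ∧ ∃ u ∈ I, G.Adj u v)

/-- The surplus of `I` inside the induced subgraph of `G` on `S`. -/
noncomputable def surpOn (G : SimpleGraph ℕ) (S I : Finset ℕ) : ℤ :=
  ((nbrOn G S I).card : ℤ) - (I.card : ℤ)

/-- The minimum surplus over nonempty independent sets of the induced subgraph of `G` on `S`. -/
noncomputable def minsurpOn (G : SimpleGraph ℕ) (S : Finset ℕ) : ℤ :=
  sInf {z : ℤ | ∃ I : Finset ℕ, I ⊆ S ∧ I.Nonempty ∧ IsIndep G I ∧ z = surpOn G S I}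

/-- `I` is a critical-set of the induced subgraph of `G` on `S`. -/
def IsCriticalOn (G : SimpleGraph ℕ) (S I : Finset ℕ) : Prop :=
  I ⊆ S ∧ I.Nonempty ∧ IsIndep G I ∧
    ∀ J ⊆ I, J.Nonempty → surpOn G S I ≤ surpOn G S J

/-- A vertex cover instance: a graph on `ℕ`, its (finite) vertex set `S`, and a budget `k`. -/
structure VCInst where
  G : SimpleGraph ℕ
  S : Finset ℕ
  k : ℤ

/-- Preprocessing rule (P1): for a critical-set `I` with surplus at most `0`, delete
`N[I]` and reduce the budget by `|N(I)|`. -/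
noncomputable def P1Step (A B : VCInst) : Prop :=
  ∃ I : Finset ℕ, IsCriticalOn A.G A.S I ∧ surpOn A.G A.S I ≤ 0 ∧
    B.G = A.G ∧ B.S = A.S \ (I ∪ nbrOn A.G A.S I) ∧
    B.k = A.k - (nbrOn A.G A.S I).card

/-- Preprocessing rule (P2) applied to the critical-set `I` with surplus `1`: delete
`N[I]`, add a fresh vertex `y` adjacent to `N(N(I))`, and reduce the budget by `|I|`. -/
noncomputable def P2StepWith (A B : VCInst) (I : Finset ℕ) : Prop :=
  IsCriticalOn A.G A.S I ∧ surpOn A.G A.S I = 1 ∧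
  ∃ y : ℕ, y ∉ A.S \ (I ∪ nbrOn A.G A.S I) ∧
    B.S = insert y (A.S \ (I ∪ nbrOn A.G A.S I)) ∧
    B.k = A.k - I.card ∧
    (∀ a ∈ A.S \ (I ∪ nbrOn A.G A.S I), ∀ b ∈ A.S \ (I ∪ nbrOn A.G A.S I),
      (B.G.Adj a b ↔ A.G.Adj a b)) ∧
    (∀ a ∈ A.S \ (I ∪ nbrOn A.G A.S I),
      (B.G.Adj a y ↔ a ∈ nbrOn A.G A.S (nbrOn A.G A.S I)))

/-- A preprocessing step: an application of rule (P1) or rule (P2). -/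
noncomputable def PStep (A B : VCInst) : Prop :=
  P1Step A B ∨ ∃ I : Finset ℕ, P2StepWith A B I

section Helpers

open Classical in
lemma mem_nbrOn {G : SimpleGraph ℕ} {S I : Finset ℕ} {v : ℕ} :
    v ∈ nbrOn G S I ↔ v ∈ S ∧ v ∉ I ∧ ∃ u ∈ I, G.Adj u v := by
  unfold nbrOn
  exact Finset.mem_filter

open Classical in
lemma nbrOn_subset (G : SimpleGraph ℕ) (S I : Finset ℕ) : nbrOn G S I ⊆ S :=
  by unfold nbrOn; exact Finset.filter_subset _ _

lemma IsIndep.subset {G : SimpleGraph ℕ} {I J : Finset ℕ} (h : J ⊆ I) (hI : IsIndep G I) :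
    IsIndep G J := fun u hu v hv => hI u (h hu) v (h hv)

lemma nbrOn_mono {G : SimpleGraph ℕ} {S I' I : Finset ℕ} (h : I' ⊆ I) (hind : IsIndep G I) :
    nbrOn G S I' ⊆ nbrOn G S I := by
  intro v hv
  rw [mem_nbrOn] at hv ⊢
  obtain ⟨hvS, hvI', u, hu, hadj⟩ := hv
  exact ⟨hvS, fun hvI => hind u (h hu) v hvI hadj, u, h hu, hadj⟩

lemma notMem_nbrOn_of_mem {G : SimpleGraph ℕ} {S I' I : Finset ℕ} (hind : IsIndep G I)
    (h : I' ⊆ I) {v : ℕ} (hv : v ∈ I) : v ∉ nbrOn G S I' := by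
  rw [mem_nbrOn]
  rintro ⟨-, -, u, hu, hadj⟩
  exact hind u (h hu) v hv hadj

lemma surp_nonneg {G : SimpleGraph ℕ} {S : Finset ℕ} (hms : 0 ≤ minsurpOn G S)
    {J : Finset ℕ} (hJS : J ⊆ S) (hJne : J.Nonempty) (hJind : IsIndep G J) :
    0 ≤ surpOn G S J := by
  have hbdd : BddBelow {z : ℤ | ∃ I : Finset ℕ, I ⊆ S ∧ I.Nonempty ∧ IsIndep G I ∧
      z = surpOn G S I} := by
    refine ⟨-(S.card : ℤ), ?_⟩
    rintro z ⟨I, hIS, -, -, rfl⟩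
    have h1 : I.card ≤ S.card := Finset.card_le_card hIS
    simp only [surpOn]
    omega
  have hle : minsurpOn G S ≤ surpOn G S J := csInf_le hbdd ⟨J, hJS, hJne, hJind, rfl⟩
  omega

end Helpers

lemma main_aux : ∀ (n : ℕ) (G : SimpleGraph ℕ) (S : Finset ℕ) (k : ℤ) (I : Finset ℕ),
    I.card ≤ n → 0 ≤ minsurpOn G S → I ⊆ S → I.Nonempty → IsIndep G I →
    surpOn G S I ≤ 1 →
    ∃ B : VCInst, Relation.ReflTransGen PStep ⟨G, S, k⟩ B ∧ B.k ≤ k - I.card := by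
  intro n
  induction n with
  | zero =>
    intro G S k I hcard _ _ hne _ _
    have := Finset.card_pos.2 hne
    omega
  | succ n ih =>
    intro G S k I hcard hms hIS hne hind hsurp
    classical
    -- choose a minimizer I' of surplus among nonempty subsets of I
    obtain ⟨I', hI'mem, hI'min⟩ :=
      Finset.exists_min_image (I.powerset.filter (fun J => J.Nonempty)) (surpOn G S)
        ⟨I, by simp [Finset.mem_filter, Finset.mem_powerset, hne]⟩
    rw [Finset.mem_filter, Finset.mem_powerset] at hI'mem
    obtain ⟨hI'I, hI'ne⟩ := hI'mem
    have hI'S : I' ⊆ S := hI'I.trans hIS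
    have hI'ind : IsIndep G I' := hind.subset hI'I
    have hmin : ∀ J ⊆ I, J.Nonempty → surpOn G S I' ≤ surpOn G S J := by
      intro J hJ hJne
      exact hI'min J (by rw [Finset.mem_filter, Finset.mem_powerset]; exact ⟨hJ, hJne⟩)
    have hs0 : 0 ≤ surpOn G S I' := surp_nonneg hms hI'S hI'ne hI'ind
    have hsI : surpOn G S I' ≤ 1 := (hmin I Subset.rfl hne).trans hsurp
    have hcases : surpOn G S I' = 0 ∨ surpOn G S I' = 1 := by omega
    rcases hcases with hs | hs
    · -- apply P1 with I'
      set N' := nbrOn G S I' with hN'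
      set S' := S \ (I' ∪ N') with hS'
      have hNcard : (N'.card : ℤ) = I'.card := by
        rw [hN']; have := hs; simp only [surpOn] at this; omega
      have hcrit : IsCriticalOn G S I' := ⟨hI'S, hI'ne, hI'ind, fun J hJ hJne =>
        (hmin J (hJ.trans hI'I) hJne)⟩
      have hstep : PStep ⟨G, S, k⟩ ⟨G, S', k - N'.card⟩ :=
        Or.inl ⟨I', hcrit, le_of_eq hs, rfl, rfl, rfl⟩
      rcases Finset.eq_empty_or_nonempty (I \ I') with hemp | hI''ne
      · -- I' = I : one step suffices
        have hII' : I = I' := Finset.Subset.antisymm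
          (fun v hv => by
            by_contra hv'
            exact (Finset.eq_empty_iff_forall_notMem.1 hemp v) (Finset.mem_sdiff.2 ⟨hv, hv'⟩))
          hI'I
        refine ⟨⟨G, S', k - N'.card⟩, Relation.ReflTransGen.single hstep, ?_⟩
        show k - (N'.card : ℤ) ≤ k - (I.card : ℤ)
        rw [hII']
        omega
      · set I'' := I \ I' with hI''
        have hI''I : I'' ⊆ I := Finset.sdiff_subset
        have hI''ind : IsIndep G I'' := hind.subset hI''I
        have hI''card : I''.card ≤ n := by
          have h1 : I''.card = I.card - I'.card := Finset.card_sdiff_of_subset hI'I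
          have h2 : 0 < I'.card := Finset.card_pos.2 hI'ne
          omega
        have hI''S' : I'' ⊆ S' := by
          intro v hv
          have hvI : v ∈ I := hI''I hv
          rw [hS', Finset.mem_sdiff, Finset.mem_union]
          refine ⟨hIS hvI, ?_⟩
          rintro (hvI' | hvN)
          · exact (Finset.mem_sdiff.1 hv).2 hvI'
          · exact notMem_nbrOn_of_mem hind hI'I hvI hvN
        -- minsurp of the reduced instance is still nonnegative
        have key : ∀ z ∈ {z : ℤ | ∃ J : Finset ℕ, J ⊆ S' ∧ J.Nonempty ∧ IsIndep G J ∧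
            z = surpOn G S' J}, 0 ≤ z := by
          rintro z ⟨J, hJS', hJne, hJind, rfl⟩
          have hJS : J ⊆ S := hJS'.trans Finset.sdiff_subset
          have hJI' : ∀ v ∈ J, v ∉ I' := by
            intro v hv hvI'
            have := Finset.mem_sdiff.1 (hJS' hv)
            exact this.2 (Finset.mem_union_left _ hvI')
          have hnoedge : ∀ u ∈ I', ∀ v ∈ J, ¬ G.Adj u v := by
            intro u hu v hv hadj
            have hvS' := Finset.mem_sdiff.1 (hJS' hv)
            exact hvS'.2 (Finset.mem_union_right _
              (mem_nbrOn.2 ⟨hJS hv, hJI' v hv, u, hu, hadj⟩))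
          have hdisj : Disjoint J I' := Finset.disjoint_left.2 (fun {a} ha => hJI' a ha)
          have hindU : IsIndep G (J ∪ I') := by
            intro u hu v hv
            rcases Finset.mem_union.1 hu with hu' | hu' <;>
              rcases Finset.mem_union.1 hv with hv' | hv'
            · exact hJind u hu' v hv'
            · intro h; exact hnoedge v hv' u hu' h.symm
            · exact hnoedge u hu' v hv'
            · exact hI'ind u hu' v hv'
          have hsubN : nbrOn G S (J ∪ I') ⊆ nbrOn G S' J ∪ nbrOn G S I' := by
            intro v hv
            rw [mem_nbrOn] at hv
            obtain ⟨hvS, hvJU, u, hu, hadj⟩ := hv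
            have hvJ : v ∉ J := fun h => hvJU (Finset.mem_union_left _ h)
            have hvI' : v ∉ I' := fun h => hvJU (Finset.mem_union_right _ h)
            by_cases hvN : v ∈ nbrOn G S I'
            · exact Finset.mem_union_right _ hvN
            · refine Finset.mem_union_left _ ?_
              have hvS' : v ∈ S' := by
                rw [hS', Finset.mem_sdiff, Finset.mem_union]
                exact ⟨hvS, fun h => h.elim hvI' hvN⟩
              rcases Finset.mem_union.1 hu with huJ | huI'
              · exact mem_nbrOn.2 ⟨hvS', hvJ, u, huJ, hadj⟩
              · exact absurd (mem_nbrOn.2 ⟨hvS, hvI', u, huI', hadj⟩) hvN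
          have h0 : 0 ≤ surpOn G S (J ∪ I') :=
            surp_nonneg hms (Finset.union_subset hJS hI'S)
              (hJne.mono Finset.subset_union_left) hindU
          have hc1 : (nbrOn G S (J ∪ I')).card ≤
              (nbrOn G S' J).card + (nbrOn G S I').card :=
            (Finset.card_le_card hsubN).trans (Finset.card_union_le _ _)
          have hc2 : (J ∪ I').card = J.card + I'.card := Finset.card_union_of_disjoint hdisj
          simp only [surpOn] at h0 hs ⊢
          omega
        have hms' : 0 ≤ minsurpOn G S' := by
          rcases Set.eq_empty_or_nonempty {z : ℤ | ∃ J : Finset ℕ, J ⊆ S' ∧ J.Nonempty ∧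
              IsIndep G J ∧ z = surpOn G S' J} with hZ | hZ
          · rw [minsurpOn, hZ, Int.csInf_empty]
          · exact le_csInf hZ key
        -- surplus of I'' in the reduced instance is at most 1
        have hNmono : nbrOn G S I' ⊆ nbrOn G S I := nbrOn_mono hI'I hind
        have hsubN2 : nbrOn G S' I'' ⊆ nbrOn G S I \ nbrOn G S I' := by
          intro v hv
          rw [mem_nbrOn] at hv
          obtain ⟨hvS', hvI'', u, hu, hadj⟩ := hv
          rw [hS', Finset.mem_sdiff, Finset.mem_union] at hvS'
          obtain ⟨hvS, hvnot⟩ := hvS'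
          have hvI' : v ∉ I' := fun h => hvnot (Or.inl h)
          have hvN' : v ∉ N' := fun h => hvnot (Or.inr h)
          have hvI : v ∉ I := by
            intro hvI
            rcases Finset.mem_sdiff.1 (show v ∈ I'' from by
              rw [hI'', Finset.mem_sdiff]; exact ⟨hvI, hvI'⟩) with ⟨_, _⟩
            exact hvI'' (by rw [hI'', Finset.mem_sdiff]; exact ⟨hvI, hvI'⟩)
          refine Finset.mem_sdiff.2 ⟨mem_nbrOn.2 ⟨hvS, hvI, u, hI''I hu, hadj⟩, hvN'⟩
        have hc3 : (nbrOn G S' I'').card ≤ (nbrOn G S I).card - (nbrOn G S I').card := by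
          have := Finset.card_le_card hsubN2
          rwa [Finset.card_sdiff_of_subset hNmono] at this
        have hc4 : I''.card = I.card - I'.card := Finset.card_sdiff_of_subset hI'I
        have hc5 : (nbrOn G S I').card ≤ (nbrOn G S I).card := Finset.card_le_card hNmono
        have hsurp'' : surpOn G S' I'' ≤ 1 := by
          simp only [surpOn] at hs hsurp ⊢
          have h2 : 0 < I'.card := Finset.card_pos.2 hI'ne
          have h3 : I'.card ≤ I.card := Finset.card_le_card hI'I
          omega
        obtain ⟨B, hB, hBk⟩ := ih G S' (k - N'.card) I'' hI''card hms' hI''S' hI''ne hI''ind hsurp''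
        refine ⟨B, Relation.ReflTransGen.head hstep hB, ?_⟩
        have h3 : I'.card ≤ I.card := Finset.card_le_card hI'I
        omega
    · -- surplus-1 case : I itself is critical, apply P2
      have hsurpI : surpOn G S I = 1 := le_antisymm hsurp (hs ▸ hmin I Subset.rfl hne)
      have hcrit : IsCriticalOn G S I := ⟨hIS, hne, hind, fun J hJ hJne => by
        rw [hsurpI, ← hs]; exact hmin J hJ hJne⟩
      obtain ⟨y, hy⟩ := Infinite.exists_notMem_finset S
      set S' := S \ (I ∪ nbrOn G S I) with hS'
      set T := nbrOn G S (nbrOn G S I) with hT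
      set G' : SimpleGraph ℕ :=
        SimpleGraph.fromRel (fun a b => (b = y ∧ a ∈ T) ∨ (a ≠ y ∧ b ≠ y ∧ G.Adj a b))
        with hG'
      have hyS' : y ∉ S' := fun h => hy ((Finset.sdiff_subset) h)
      have hstep : PStep ⟨G, S, k⟩ ⟨G', insert y S', k - I.card⟩ := by
        refine Or.inr ⟨I, hcrit, hsurpI, y, hyS', rfl, rfl, ?_, ?_⟩
        · intro a ha b hb
          have hay : a ≠ y := fun h => hy (Finset.sdiff_subset (h ▸ ha))
          have hby : b ≠ y := fun h => hy (Finset.sdiff_subset (h ▸ hb))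
          have hsymm : G.Adj b a ↔ G.Adj a b := ⟨fun h => h.symm, fun h => h.symm⟩
          have hne' : G.Adj a b → a ≠ b := SimpleGraph.Adj.ne
          simp only [hG', SimpleGraph.fromRel_adj]
          tauto
        · intro a ha
          have hay : a ≠ y := fun h => hy (Finset.sdiff_subset (h ▸ ha))
          simp only [hG', SimpleGraph.fromRel_adj]
          tauto
      exact ⟨⟨G', insert y S', k - I.card⟩, Relation.ReflTransGen.single hstep, le_refl _⟩

/-- If `minsurp(G) ≥ 0` and `I` is a nonempty independent set with `surp(I) ≤ 1`, then
some sequence of preprocessing operations (P1)/(P2) reduces the budget by at least `|I|`. -/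
theorem preprocessing_reduces_budget (G : SimpleGraph ℕ) (S : Finset ℕ) (k : ℤ)
    (hms : 0 ≤ minsurpOn G S) (I : Finset ℕ) (hIS : I ⊆ S) (hne : I.Nonempty)
    (hind : IsIndep G I) (hsurp : surpOn G S I ≤ 1) :
    ∃ B : VCInst, Relation.ReflTransGen PStep ⟨G, S, k⟩ B ∧ B.k ≤ k - I.card :=
  main_aux I.card G S k I le_rfl hms hIS hne hind hsurp
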